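/- Let Ω ⊂ ℝ² be a bounded measurable set, k ∈ ℝ² with k ≠ 0, and let φ₁, φ₂ be the complex geometric optics functions for k. Let δ ∈ L^∞(Ω) be complex-valued, set γ = 1 + δ, and let v₁, v₂ : Ω → ℂ be differentiable functions with all appearing gradient dot products integrable over Ω and satisfying ∫_Ω ∇φ₁ · ∇v₂ dx = 0 and ∫_Ω ∇φ₂ · ∇v₁ dx = 0. Define, with ω₁ = φ₁ + v₁ and ω₂ = φ₂ + v₂, F̂(k) = −(1/(2π²|k|²)) [ ∫_Ω γ ∇ω₁ · ∇ω₂ dx − ∫_Ω ∇φ₁ · ∇φ₂ dx ], E(k) = Ẽ(k)/(2π²|k|²), and Ẽ(k) = ∫_Ω [δ(∇φ₁ · ∇v₂ + ∇φ₂ · ∇v₁) + γ ∇v₁ · ∇v₂] dx. Then the Fourier transform δ̂(k) = ∫_Ω δ(x) e^{2πi k·x} dx satisfies δ̂(k) = F̂(k) + E(k). -/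

import Mathlib

/-!
Since `φ₁ φ₂ = e^{2πi k·x}` and `∇φ₁ · ∇φ₂ = -2π²|k|² φ₁ φ₂`, expanding `γ ∇ω₁ · ∇ω₂` with
`γ = 1 + δ` gives, pointwise,
`γ ∇ω₁·∇ω₂ = ∇φ₁·∇φ₂ - 2π²|k|² δ e^{2πi k·x} + ∇φ₁·∇v₂ + ∇φ₂·∇v₁ + Ẽ-integrand`.
Integrating over `Ω`, the terms `∇φ₁·∇v₂` and `∇φ₂·∇v₁` integrate to zero by hypothesis, and
solving for `δ̂(k)` gives the formula.
-/

open Real Complex MeasureTheory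

/-- First partial derivative `∂₁ f` of `f : ℝ² → ℂ`. -/
noncomputable def pd1 (f : ℝ × ℝ → ℂ) (x : ℝ × ℝ) : ℂ := fderiv ℝ f x (1, 0)

/-- Second partial derivative `∂₂ f` of `f : ℝ² → ℂ`. -/
noncomputable def pd2 (f : ℝ × ℝ → ℂ) (x : ℝ × ℝ) : ℂ := fderiv ℝ f x (0, 1)

/-- The bilinear (non-conjugated) dot product of gradients:
`∇u · ∇v = ∂₁u ∂₁v + ∂₂u ∂₂v`. -/
noncomputable def gdot (u v : ℝ × ℝ → ℂ) (x : ℝ × ℝ) : ℂ :=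
  pd1 u x * pd1 v x + pd2 u x * pd2 v x

/-- The complex geometric optics function `φ₁(x;k) = exp(πi k·x + π k⊥·x)`,
with `k⊥ = (-k₂,k₁)`. -/
noncomputable def cgo1 (k : ℝ × ℝ) (x : ℝ × ℝ) : ℂ :=
  Complex.exp ((Real.pi : ℂ) * Complex.I * ((k.1 : ℂ) * x.1 + (k.2 : ℂ) * x.2) +
    (Real.pi : ℂ) * ((-(k.2 : ℂ)) * x.1 + (k.1 : ℂ) * x.2))

/-- The complex geometric optics function `φ₂(x;k) = exp(πi k·x − π k⊥·x)`. -/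
noncomputable def cgo2 (k : ℝ × ℝ) (x : ℝ × ℝ) : ℂ :=
  Complex.exp ((Real.pi : ℂ) * Complex.I * ((k.1 : ℂ) * x.1 + (k.2 : ℂ) * x.2) -
    (Real.pi : ℂ) * ((-(k.2 : ℂ)) * x.1 + (k.1 : ℂ) * x.2))

section Gradients

variable {f g u v : ℝ × ℝ → ℂ} {x : ℝ × ℝ}

theorem gdot_comm (u v : ℝ × ℝ → ℂ) (x : ℝ × ℝ) : gdot u v x = gdot v u x := by
  simp only [gdot]
  ring

theorem pd1_add (hf : DifferentiableAt ℝ f x) (hg : DifferentiableAt ℝ g x) :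
    pd1 (f + g) x = pd1 f x + pd1 g x := by
  simp only [pd1, fderiv_add hf hg, add_apply]

theorem pd2_add (hf : DifferentiableAt ℝ f x) (hg : DifferentiableAt ℝ g x) :
    pd2 (f + g) x = pd2 f x + pd2 g x := by
  simp only [pd2, fderiv_add hf hg, add_apply]

theorem gdot_add_add (hf : DifferentiableAt ℝ f x) (hu : DifferentiableAt ℝ u x)
    (hg : DifferentiableAt ℝ g x) (hv : DifferentiableAt ℝ v x) :
    gdot (f + u) (g + v) x = gdot f g x + gdot f v x + gdot u g x + gdot u v x := by
  simp only [gdot, pd1_add hf hu, pd2_add hf hu, pd1_add hg hv, pd2_add hg hv]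
  ring

end Gradients

theorem hasFDerivAt_exp_linear (a b : ℂ) (x : ℝ × ℝ) :
    HasFDerivAt (fun y : ℝ × ℝ => exp (a * y.1 + b * y.2))
      (exp (a * x.1 + b * x.2) •
        (a • ofRealCLM.comp (.fst ℝ ℝ ℝ) + b • ofRealCLM.comp (.snd ℝ ℝ ℝ))) x :=
  ((((ofRealCLM.comp (.fst ℝ ℝ ℝ)).hasFDerivAt).const_mul a).add
    (((ofRealCLM.comp (.snd ℝ ℝ ℝ)).hasFDerivAt).const_mul b)).cexp

theorem differentiable_exp_linear (a b : ℂ) :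
    Differentiable ℝ (fun y : ℝ × ℝ => exp (a * y.1 + b * y.2)) :=
  fun x => (hasFDerivAt_exp_linear a b x).differentiableAt

theorem gdot_exp_linear (a b a' b' : ℂ) (x : ℝ × ℝ) :
    gdot (fun y => exp (a * y.1 + b * y.2)) (fun y => exp (a' * y.1 + b' * y.2)) x =
      (a * a' + b * b') * exp ((a + a') * x.1 + (b + b') * x.2) := by
  rw [show (a + a') * x.1 + (b + b') * x.2 = (a * x.1 + b * x.2) + (a' * x.1 + b' * x.2) by ring,
    Complex.exp_add]
  simp only [gdot, pd1, pd2, (hasFDerivAt_exp_linear _ _ x).fderiv]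
  simp only [smul_add, add_apply, smul_apply, ContinuousLinearMap.comp_apply,
    ContinuousLinearMap.coe_fst', ContinuousLinearMap.coe_snd', ofRealCLM_apply, ofReal_one,
    ofReal_zero, smul_eq_mul, mul_one, mul_zero, add_zero, zero_add]
  ring

theorem cgo1_eq (k : ℝ × ℝ) :
    cgo1 k = fun y => exp ((π * I * k.1 - π * k.2) * y.1 + (π * I * k.2 + π * k.1) * y.2) := by
  funext y
  rw [cgo1]
  ring_nf

theorem cgo2_eq (k : ℝ × ℝ) :
    cgo2 k = fun y => exp ((π * I * k.1 + π * k.2) * y.1 + (π * I * k.2 - π * k.1) * y.2) := by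
  funext y
  rw [cgo2]
  ring_nf

theorem differentiable_cgo1 (k : ℝ × ℝ) : Differentiable ℝ (cgo1 k) :=
  cgo1_eq k ▸ differentiable_exp_linear _ _

theorem differentiable_cgo2 (k : ℝ × ℝ) : Differentiable ℝ (cgo2 k) :=
  cgo2_eq k ▸ differentiable_exp_linear _ _

theorem gdot_cgo1_cgo2 (k x : ℝ × ℝ) :
    gdot (cgo1 k) (cgo2 k) x =
      -(2 * (π : ℂ) ^ 2 * ((k.1 : ℂ) ^ 2 + (k.2 : ℂ) ^ 2)) *
        exp (2 * π * I * ((k.1 : ℂ) * x.1 + (k.2 : ℂ) * x.2)) := by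
  rw [cgo1_eq, cgo2_eq, gdot_exp_linear]
  congr 1
  · linear_combination ((π : ℂ) ^ 2 * ((k.1 : ℂ) ^ 2 + (k.2 : ℂ) ^ 2)) * I_sq
  · ring_nf

theorem integrable_mul_exp_two_pi_I {μ : Measure (ℝ × ℝ)} [IsFiniteMeasure μ] {δ : ℝ × ℝ → ℂ}
    (hδ : MemLp δ ⊤ μ) (k : ℝ × ℝ) :
    Integrable (fun x => δ x * exp (2 * π * I * ((k.1 : ℂ) * x.1 + (k.2 : ℂ) * x.2))) μ := by
  have hcont :
      Continuous fun x : ℝ × ℝ => exp (2 * π * I * ((k.1 : ℂ) * x.1 + (k.2 : ℂ) * x.2)) := by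
    fun_prop
  refine (hδ.integrable le_top).mul_bdd (c := 1) hcont.aestronglyMeasurable
    (ae_of_all _ fun x => ?_)
  have hre : (2 * π * I * ((k.1 : ℂ) * x.1 + (k.2 : ℂ) * x.2)).re = 0 := by
    simp [mul_re, mul_im]
  rw [norm_exp, hre, Real.exp_zero]

theorem sq_add_sq_ne_zero_of_ne_zero {k : ℝ × ℝ} (hk : k ≠ 0) :
    (k.1 : ℂ) ^ 2 + (k.2 : ℂ) ^ 2 ≠ 0 := by
  have hk' : k.1 ^ 2 + k.2 ^ 2 ≠ 0 := by
    contrapose! hk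
    ext <;> simp only [Prod.fst_zero, Prod.snd_zero] <;> nlinarith [sq_nonneg k.1, sq_nonneg k.2]
  exact_mod_cast hk'

theorem calderon_fourier_formula_general (Ω : Set (ℝ × ℝ)) (hΩb : Bornology.IsBounded Ω)
    (k : ℝ × ℝ) (hk : k ≠ 0)
    (δ : ℝ × ℝ → ℂ) (hδ : MemLp δ ⊤ (volume.restrict Ω))
    (γ : ℝ × ℝ → ℂ) (hγ : ∀ x, γ x = 1 + δ x)
    (v₁ v₂ : ℝ × ℝ → ℂ) (hv₁ : Differentiable ℝ v₁) (hv₂ : Differentiable ℝ v₂)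
    (ω₁ ω₂ : ℝ × ℝ → ℂ) (hω₁ : ∀ x, ω₁ x = cgo1 k x + v₁ x)
    (hω₂ : ∀ x, ω₂ x = cgo2 k x + v₂ x)
    (hint₁ : IntegrableOn (fun x => gdot (cgo1 k) v₂ x) Ω)
    (hint₂ : IntegrableOn (fun x => gdot (cgo2 k) v₁ x) Ω)
    (hint₃ : IntegrableOn (fun x => δ x * gdot (cgo1 k) v₂ x) Ω)
    (hint₄ : IntegrableOn (fun x => δ x * gdot (cgo2 k) v₁ x) Ω)
    (hint₅ : IntegrableOn (fun x => γ x * gdot v₁ v₂ x) Ω)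
    (hzero₁ : ∫ x in Ω, gdot (cgo1 k) v₂ x = 0)
    (hzero₂ : ∫ x in Ω, gdot (cgo2 k) v₁ x = 0) :
    ∫ x in Ω, δ x * Complex.exp (2 * (Real.pi : ℂ) * Complex.I *
        ((k.1 : ℂ) * x.1 + (k.2 : ℂ) * x.2)) =
      -(1 / (2 * (Real.pi : ℂ) ^ 2 * ((k.1 : ℂ) ^ 2 + (k.2 : ℂ) ^ 2))) *
        ((∫ x in Ω, γ x * gdot ω₁ ω₂ x) - ∫ x in Ω, gdot (cgo1 k) (cgo2 k) x) +
      (∫ x in Ω, (δ x * (gdot (cgo1 k) v₂ x + gdot (cgo2 k) v₁ x) +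
        γ x * gdot v₁ v₂ x)) / (2 * (Real.pi : ℂ) ^ 2 * ((k.1 : ℂ) ^ 2 + (k.2 : ℂ) ^ 2)) := by
  have : IsFiniteMeasure (volume.restrict Ω) := isFiniteMeasure_restrict.mpr hΩb.measure_lt_top.ne
  set c : ℂ := 2 * (Real.pi : ℂ) ^ 2 * ((k.1 : ℂ) ^ 2 + (k.2 : ℂ) ^ 2) with hc
  have hc0 : c ≠ 0 := mul_ne_zero (by simp [Real.pi_ne_zero]) (sq_add_sq_ne_zero_of_ne_zero hk)
  set e : ℝ × ℝ → ℂ := fun x => Complex.exp (2 * (Real.pi : ℂ) * Complex.I *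
    ((k.1 : ℂ) * x.1 + (k.2 : ℂ) * x.2)) with he
  set E : ℝ × ℝ → ℂ := fun x =>
    δ x * (gdot (cgo1 k) v₂ x + gdot (cgo2 k) v₁ x) + γ x * gdot v₁ v₂ x with hE
  have hpt : ∀ x, γ x * gdot ω₁ ω₂ x = gdot (cgo1 k) (cgo2 k) x + -c * (δ x * e x) +
      gdot (cgo1 k) v₂ x + gdot (cgo2 k) v₁ x + E x := by
    intro x
    rw [show ω₁ = cgo1 k + v₁ from funext hω₁, show ω₂ = cgo2 k + v₂ from funext hω₂,
      gdot_add_add (differentiable_cgo1 k x) (hv₁ x) (differentiable_cgo2 k x) (hv₂ x),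
      gdot_comm v₁, gdot_cgo1_cgo2]
    simp only [hE, hγ, hc, he]
    ring
  have hφφ : IntegrableOn (gdot (cgo1 k) (cgo2 k)) Ω :=
    (integrable_mul_exp_two_pi_I (memLp_const (-c)) k).congr
      (ae_of_all _ fun x => (gdot_cgo1_cgo2 k x).symm)
  have hδe : IntegrableOn (fun x => -c * (δ x * e x)) Ω :=
    (integrable_mul_exp_two_pi_I hδ k).const_mul (-c)
  have hEint : IntegrableOn E Ω :=
    ((hint₃.fun_add hint₄).fun_add hint₅).congr (ae_of_all _ fun x => by simp only [hE]; ring)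
  have hsplit : ∫ x in Ω, γ x * gdot ω₁ ω₂ x =
      (∫ x in Ω, gdot (cgo1 k) (cgo2 k) x) + -c * (∫ x in Ω, δ x * e x) + ∫ x in Ω, E x := by
    rw [integral_congr_ae (ae_of_all _ hpt),
      integral_add (((hφφ.fun_add hδe).fun_add hint₁).fun_add hint₂) hEint,
      integral_add ((hφφ.fun_add hδe).fun_add hint₁) hint₂, integral_add (hφφ.fun_add hδe) hint₁,
      integral_add hφφ hδe, integral_const_mul, hzero₁, hzero₂, add_zero, add_zero]
  rw [hsplit]
  field_simp
  ring

/-- Calderón's reconstruction formula: with `γ = 1 + δ`, `ω₁ = φ₁ + v₁`, `ω₂ = φ₂ + v₂`,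
`F̂(k) = −(1/(2π²|k|²))[∫_Ω γ ∇ω₁·∇ω₂ dx − ∫_Ω ∇φ₁·∇φ₂ dx]` and
`E(k) = Ẽ(k)/(2π²|k|²)` with `Ẽ(k) = ∫_Ω [δ(∇φ₁·∇v₂ + ∇φ₂·∇v₁) + γ ∇v₁·∇v₂] dx`,
the Fourier transform `δ̂(k) = ∫_Ω δ(x) e^{2πik·x} dx` satisfies `δ̂(k) = F̂(k) + E(k)`. -/
theorem calderon_fourier_formula (Ω : Set (ℝ × ℝ)) (hΩb : Bornology.IsBounded Ω)
    (hΩm : MeasurableSet Ω) (k : ℝ × ℝ) (hk : k ≠ 0)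
    (δ : ℝ × ℝ → ℂ) (hδ : MemLp δ ⊤ (volume.restrict Ω))
    (γ : ℝ × ℝ → ℂ) (hγ : ∀ x, γ x = 1 + δ x)
    (v₁ v₂ : ℝ × ℝ → ℂ) (hv₁ : Differentiable ℝ v₁) (hv₂ : Differentiable ℝ v₂)
    (ω₁ ω₂ : ℝ × ℝ → ℂ) (hω₁ : ∀ x, ω₁ x = cgo1 k x + v₁ x)
    (hω₂ : ∀ x, ω₂ x = cgo2 k x + v₂ x)
    (hint₁ : IntegrableOn (fun x => gdot (cgo1 k) v₂ x) Ω)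
    (hint₂ : IntegrableOn (fun x => gdot (cgo2 k) v₁ x) Ω)
    (hint₃ : IntegrableOn (fun x => δ x * gdot (cgo1 k) v₂ x) Ω)
    (hint₄ : IntegrableOn (fun x => δ x * gdot (cgo2 k) v₁ x) Ω)
    (hint₅ : IntegrableOn (fun x => γ x * gdot v₁ v₂ x) Ω)
    (hzero₁ : ∫ x in Ω, gdot (cgo1 k) v₂ x = 0)
    (hzero₂ : ∫ x in Ω, gdot (cgo2 k) v₁ x = 0) :
    ∫ x in Ω, δ x * Complex.exp (2 * (Real.pi : ℂ) * Complex.I *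
        ((k.1 : ℂ) * x.1 + (k.2 : ℂ) * x.2)) =
      -(1 / (2 * (Real.pi : ℂ) ^ 2 * ((k.1 : ℂ) ^ 2 + (k.2 : ℂ) ^ 2))) *
        ((∫ x in Ω, γ x * gdot ω₁ ω₂ x) - ∫ x in Ω, gdot (cgo1 k) (cgo2 k) x) +
      (∫ x in Ω, (δ x * (gdot (cgo1 k) v₂ x + gdot (cgo2 k) v₁ x) +
        γ x * gdot v₁ v₂ x)) / (2 * (Real.pi : ℂ) ^ 2 * ((k.1 : ℂ) ^ 2 + (k.2 : ℂ) ^ 2)) :=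
  calderon_fourier_formula_general Ω hΩb k hk δ hδ γ hγ v₁ v₂ hv₁ hv₂ ω₁ ω₂ hω₁ hω₂ hint₁ hint₂
    hint₃ hint₄ hint₅ hzero₁ hzero₂
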